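/- arXiv:0907.1141 — 12 statements merged into one kernel-verified Lean document; each statement's English description precedes it below -/
import Mathlib

section
/- An element a of a ring R is left morphic if and only if there exists b ∈ R such that the left annihilator of a equals Rb and the left annihilator of b equals Ra. -/
/-- The left annihilator of `a` in `R`, as a left submodule (left ideal) of `R`. -/
def leftAnn {R : Type*} [Ring R] (a : R) : Submodule R R where
  carrier := {x | x * a = 0}
  add_mem' := by
    intro x y hx hy
    simp only [Set.mem_setOf_eq] at *
    rw [add_mul, hx, hy, add_zero]
  zero_mem' := by simp
  smul_mem' := by
    intro r x hx
    simp only [Set.mem_setOf_eq, smul_eq_mul] at *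
    rw [mul_assoc, hx, mul_zero]

lemma mem_leftAnn {R : Type*} [Ring R] {a x : R} : x ∈ leftAnn a ↔ x * a = 0 := Iff.rfl

/-- An element `a` of a ring `R` is left morphic (i.e. `R/Ra ≅ ann_l(a)` as left
`R`-modules) if and only if there exists `b ∈ R` such that `ann_l(a) = Rb` and
`ann_l(b) = Ra`. -/
theorem stmt0 {R : Type*} [Ring R] (a : R) :
    Nonempty ((R ⧸ Submodule.span R ({a} : Set R)) ≃ₗ[R] leftAnn a) ↔
      ∃ b : R, leftAnn a = Submodule.span R ({b} : Set R) ∧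
        leftAnn b = Submodule.span R ({a} : Set R) := by
  constructor
  · rintro ⟨φ⟩
    set q1 : R ⧸ Submodule.span R ({a} : Set R) := Submodule.Quotient.mk 1 with hq1
    have key : ∀ r : R, (Submodule.Quotient.mk r : R ⧸ Submodule.span R ({a} : Set R))
        = r • q1 := by
      intro r
      rw [hq1, ← Submodule.Quotient.mk_smul]
      simp [smul_eq_mul]
    refine ⟨(φ q1 : R), ?_, ?_⟩
    · apply le_antisymm
      · intro x hx
        obtain ⟨q, hq⟩ := φ.surjective ⟨x, hx⟩
        obtain ⟨r, rfl⟩ := Submodule.Quotient.mk_surjective _ q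
        rw [Submodule.mem_span_singleton]
        refine ⟨r, ?_⟩
        have : (φ (Submodule.Quotient.mk r) : R) = x := congrArg Subtype.val hq
        rw [key r, map_smul] at this
        simpa using this
      · rw [Submodule.span_le, Set.singleton_subset_iff]
        exact (φ q1).2
    · ext r
      rw [mem_leftAnn]
      have hr : r * (φ q1 : R) = (φ (Submodule.Quotient.mk r) : R) := by
        rw [key r, map_smul]; simp
      rw [hr]
      constructor
      · intro h
        have : φ (Submodule.Quotient.mk r) = 0 := Subtype.ext (by simpa using h)
        have : (Submodule.Quotient.mk r : R ⧸ Submodule.span R ({a} : Set R)) = 0 := by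
          apply φ.injective; simpa using this
        exact (Submodule.Quotient.mk_eq_zero _).mp this
      · intro h
        have : (Submodule.Quotient.mk r : R ⧸ Submodule.span R ({a} : Set R)) = 0 :=
          (Submodule.Quotient.mk_eq_zero _).mpr h
        rw [this, map_zero]; rfl
  · rintro ⟨b, h1, h2⟩
    have hb : b * a = 0 := by
      have : b ∈ leftAnn a := h1 ▸ Submodule.mem_span_singleton_self b
      exact this
    let f : R →ₗ[R] leftAnn a :=
      { toFun := fun r => ⟨r * b, by
          show r * b * a = 0
          rw [mul_assoc, hb, mul_zero]⟩
        map_add' := fun x y => by ext; simp [add_mul]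
        map_smul' := fun r x => by ext; simp [mul_assoc] }
    have hsurj : Function.Surjective f := by
      rintro ⟨x, hx⟩
      rw [h1, Submodule.mem_span_singleton] at hx
      obtain ⟨r, rfl⟩ := hx
      exact ⟨r, rfl⟩
    have hker : LinearMap.ker f = Submodule.span R ({a} : Set R) := by
      rw [← h2]
      ext r
      simp only [LinearMap.mem_ker, f, LinearMap.coe_mk, AddHom.coe_mk, mem_leftAnn,
        Subtype.ext_iff]
      rfl
    exact ⟨(Submodule.quotEquivOfEq _ _ hker.symm).trans
      (LinearMap.quotKerEquivOfSurjective f hsurj)⟩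
end

section
/- Let S = R ⋉ M be a trivial extension. For a ∈ R and m, n ∈ M, the left annihilator of (0,m) in S equals S(a,n) if and only if ann_l^R(m) = Ra and ann_l^R(a)·n + Ma = M. -/
open TrivSqZeroExt

/-- For the trivial extension `S = R ⋉ M`, `a ∈ R`, `m n ∈ M`:
`ann_l^S((0,m)) = S·(a,n)` iff `ann_l^R(m) = Ra` and `ann_l^R(a)·n + Ma = M`. -/
theorem stmt2 {R M : Type*} [Ring R] [AddCommGroup M] [Module R M] [Module Rᵐᵒᵖ M]
    [SMulCommClass R Rᵐᵒᵖ M] (a : R) (m n : M) :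
    ({z : TrivSqZeroExt R M | z * inr m = 0} =
        {z : TrivSqZeroExt R M | ∃ w, z = w * (inl a + inr n)}) ↔
      (({r : R | r • m = 0} = {r : R | ∃ s : R, r = s * a}) ∧
        (∀ x : M, ∃ (c : R) (y : M), c * a = 0 ∧ x = c • n + MulOpposite.op a • y)) := by
  have key : ∀ z : TrivSqZeroExt R M, z * inr m = 0 ↔ fst z • m = 0 := by
    intro z
    rw [TrivSqZeroExt.ext_iff]
    simp
  have key2 : ∀ z w : TrivSqZeroExt R M, z = w * (inl a + inr n) ↔
      (fst z = fst w * a ∧ snd z = fst w • n + MulOpposite.op a • snd w) := by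
    intro z w
    rw [TrivSqZeroExt.ext_iff]
    simp
  constructor
  · intro h
    have h' : ∀ z : TrivSqZeroExt R M, fst z • m = 0 ↔
        ∃ w : TrivSqZeroExt R M,
          fst z = fst w * a ∧ snd z = fst w • n + MulOpposite.op a • snd w := by
      intro z
      rw [← key]
      have hz := Set.ext_iff.mp h z
      simp only [Set.mem_setOf_eq] at hz
      rw [hz]
      exact exists_congr fun w => key2 z w
    constructor
    · ext r
      simp only [Set.mem_setOf_eq]
      constructor
      · intro hr
        obtain ⟨w, hw1, _⟩ := (h' (inl r)).mp (by simpa using hr)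
        exact ⟨fst w, by simpa using hw1⟩
      · rintro ⟨s, rfl⟩
        have := (h' (inl (s * a) + inr (s • n))).mpr ⟨inl s, by simp, by simp⟩
        simpa using this
    · intro x
      obtain ⟨w, hw1, hw2⟩ := (h' (inr x)).mp (by simp)
      exact ⟨fst w, snd w, by simpa using hw1.symm, by simpa using hw2⟩
  · rintro ⟨h1, h2⟩
    ext z
    simp only [Set.mem_setOf_eq]
    rw [key]
    constructor
    · intro hz
      obtain ⟨s, hs⟩ := (Set.ext_iff.mp h1 (fst z)).mp hz
      obtain ⟨c, y, hc, hx⟩ := h2 (snd z - s • n)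
      refine ⟨inl (s + c) + inr y, (key2 z _).mpr ⟨?_, ?_⟩⟩
      · simp [add_mul, hc, hs]
      · have : snd z = s • n + (c • n + MulOpposite.op a • y) := by
          rw [← hx]; abel
        simp [add_smul, this]; abel
    · rintro ⟨w, hw⟩
      obtain ⟨hw1, hw2⟩ := (key2 z w).mp hw
      have ha : a • m = 0 := by
        have : a ∈ {r : R | r • m = 0} := by rw [h1]; exact ⟨1, (one_mul a).symm⟩
        exact this
      rw [hw1, mul_smul, ha, smul_zero]
end

section
/- Let S = R ⋉ M be a trivial extension. For a ∈ R and m, n ∈ M, the left annihilator of (a,n) in S equals S(0,m) if and only if ann_l^M(a) = Rm, ann_l^R(a)·n ∩ Ma = 0, and ann_l^R(a) ∩ ann_l^R(n) = 0. -/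
open TrivSqZeroExt

/-- For the trivial extension `S = R ⋉ M`, `a ∈ R`, `m n ∈ M`:
`ann_l^S((a,n)) = S·(0,m)` iff `ann_l^M(a) = Rm`, `ann_l^R(a)·n ∩ Ma = 0`, and
`ann_l^R(a) ∩ ann_l^R(n) = 0`. -/
theorem stmt3 {R M : Type*} [Ring R] [AddCommGroup M] [Module R M] [Module Rᵐᵒᵖ M]
    [SMulCommClass R Rᵐᵒᵖ M] (a : R) (m n : M) :
    ({z : TrivSqZeroExt R M | z * (inl a + inr n) = 0} =
        {z : TrivSqZeroExt R M | ∃ w, z = w * inr m}) ↔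
      (({x : M | MulOpposite.op a • x = 0} = {x : M | ∃ r : R, x = r • m}) ∧
        (∀ x : M, x ∈ {x : M | ∃ c : R, c * a = 0 ∧ x = c • n} →
          x ∈ {x : M | ∃ y : M, x = MulOpposite.op a • y} → x = 0) ∧
        (∀ r : R, r * a = 0 → r • n = 0 → r = 0)) := by
  have key : ∀ z : TrivSqZeroExt R M, z * (inl a + inr n) = 0 ↔
      (z.fst * a = 0 ∧ z.fst • n + MulOpposite.op a • z.snd = 0) := by
    intro z
    rw [TrivSqZeroExt.ext_iff]
    simp [fst_mul, snd_mul, add_comm]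
  have key2 : ∀ z : TrivSqZeroExt R M, (∃ w, z = w * inr m) ↔
      (z.fst = 0 ∧ ∃ s : R, z.snd = s • m) := by
    intro z
    constructor
    · rintro ⟨w, rfl⟩
      refine ⟨by simp [fst_mul], w.fst, by simp [snd_mul]⟩
    · rintro ⟨h1, s, h2⟩
      refine ⟨inl s, ?_⟩
      rw [TrivSqZeroExt.ext_iff]
      constructor
      · simp [fst_mul, h1]
      · simp [snd_mul, h2]
  rw [Set.ext_iff]
  simp only [Set.mem_setOf_eq]
  constructor
  · intro h
    refine ⟨?_, ?_, ?_⟩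
    · ext x
      simp only [Set.mem_setOf_eq]
      constructor
      · intro hx
        have := (h (inr x)).mp (by rw [key]; simp [hx])
        rw [key2] at this
        obtain ⟨-, s, hs⟩ := this
        exact ⟨s, by simpa using hs⟩
      · rintro ⟨r, rfl⟩
        have := (h (inl r * inr m)).mpr ⟨inl r, rfl⟩
        rw [key] at this
        have h2 := this.2
        simpa [snd_mul] using h2
    · rintro x ⟨c, hc, rfl⟩ ⟨y, hy⟩
      have := (h (inl c + inr (-y))).mp ?_
      · rw [key2] at this
        have hc0 : c = 0 := by simpa using this.1
        simp [hc0]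
      · rw [key]
        constructor
        · simpa using hc
        · simp only [fst_add, snd_add, fst_inl, fst_inr, snd_inl, snd_inr, add_zero, zero_add]
          rw [smul_neg, ← hy]
          abel
    · intro r hra hrn
      have := (h (inl r)).mp (by rw [key]; simp [hra, hrn])
      rw [key2] at this
      simpa using this.1
  · rintro ⟨h1, h2, h3⟩ z
    rw [key, key2]
    have h1' := Set.ext_iff.mp h1
    simp only [Set.mem_setOf_eq] at h1'
    constructor
    · rintro ⟨hza, hzn⟩
      have han : z.fst • n = MulOpposite.op a • (-z.snd) := by
        rw [smul_neg, eq_neg_iff_add_eq_zero]; exact hzn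
      have hn0 : z.fst • n = 0 := h2 _ ⟨z.fst, hza, rfl⟩ ⟨-z.snd, han⟩
      have hz0 : z.fst = 0 := h3 _ hza hn0
      have : MulOpposite.op a • z.snd = 0 := by
        rw [hz0] at hzn; simpa using hzn
      exact ⟨hz0, (h1' z.snd).mp this⟩
    · rintro ⟨hz0, s, hs⟩
      refine ⟨by simp [hz0], ?_⟩
      rw [hz0, hs]
      have : MulOpposite.op a • (s • m) = 0 := (h1' (s • m)).mpr ⟨s, rfl⟩
      simpa using this
end

section
/- If the trivial extension S = R ⋉ M is left morphic, then for every m ∈ M there exists a ∈ R such that ann_l^R(m) = Ra and ann_l^M(a) = Rm. -/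
open TrivSqZeroExt

/-- A ring `S` is left morphic if every element `a` admits `b` with
`ann_l(a) = Sb` and `ann_l(b) = Sa`. -/
def IsLeftMorphicRing (S : Type*) [Ring S] : Prop :=
  ∀ a : S, ∃ b : S, ({x : S | x * a = 0} = {x : S | ∃ r, x = r * b}) ∧
    ({x : S | x * b = 0} = {x : S | ∃ r, x = r * a})

/-- If the trivial extension `R ⋉ M` is left morphic, then for every `m ∈ M` there is
`a ∈ R` with `ann_l^R(m) = Ra` and `ann_l^M(a) = Rm`. -/
theorem stmt4 {R M : Type*} [Ring R] [AddCommGroup M] [Module R M] [Module Rᵐᵒᵖ M]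
    [SMulCommClass R Rᵐᵒᵖ M] (h : IsLeftMorphicRing (TrivSqZeroExt R M)) :
    ∀ m : M, ∃ a : R, ({r : R | r • m = 0} = {r : R | ∃ s : R, r = s * a}) ∧
      ({x : M | MulOpposite.op a • x = 0} = {x : M | ∃ r : R, x = r • m}) := by
  intro m
  obtain ⟨b, h1, h2⟩ := h (inr m : TrivSqZeroExt R M)
  refine ⟨b.fst, ?_, ?_⟩
  · ext r
    simp only [Set.mem_setOf_eq]
    constructor
    · intro hr
      have hmem : (inl r : TrivSqZeroExt R M) ∈
          {x : TrivSqZeroExt R M | x * inr m = 0} := by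
        show (inl r : TrivSqZeroExt R M) * inr m = 0
        ext <;> simp [hr]
      rw [h1] at hmem
      obtain ⟨s, hs⟩ := hmem
      exact ⟨s.fst, by have := congrArg TrivSqZeroExt.fst hs; simpa using this⟩
    · rintro ⟨s, rfl⟩
      have hmem : (inl s * b : TrivSqZeroExt R M) ∈
          {x : TrivSqZeroExt R M | ∃ r, x = r * b} := ⟨inl s, rfl⟩
      rw [← h1] at hmem
      have := congrArg TrivSqZeroExt.snd hmem
      simpa using this
  · ext x
    simp only [Set.mem_setOf_eq]
    constructor
    · intro hx
      have hmem : (inr x : TrivSqZeroExt R M) ∈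
          {y : TrivSqZeroExt R M | y * b = 0} := by
        show (inr x : TrivSqZeroExt R M) * b = 0
        ext <;> simp [hx]
      rw [h2] at hmem
      obtain ⟨s, hs⟩ := hmem
      refine ⟨s.fst, ?_⟩
      have := congrArg TrivSqZeroExt.snd hs
      simpa using this
    · rintro ⟨r, rfl⟩
      have hmem : (inl r * inr m : TrivSqZeroExt R M) ∈
          {y : TrivSqZeroExt R M | ∃ s, y = s * inr m} := ⟨inl r, rfl⟩
      rw [← h2] at hmem
      have := congrArg TrivSqZeroExt.snd hmem
      simpa using this
end

section
/- If the trivial extension R ⋉ M is left morphic, then M is a Bézout left R-module: every finitely generated left submodule of M is cyclic. -/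
open TrivSqZeroExt

/-!
A left morphic ring is left Bézout: writing `Sa = ann_l(c)` and `S(bc) = ann_l(d)`, one gets
`Sa + Sb = ann_l(cd)`, and `ann_l(cd)` is principal. In `R ⋉ M` we have
`s * inr m = inr (s.fst • m)`, so the left ideal generated by `inr '' T` consists of the `inr m`
with `m ∈ R T`; a generator `inr m` of it then gives `R T = R m`.
-/

section LeftAnnihilator

variable {S : Type*} [Ring S]

theorem mem_span_pair_iff_mul_eq_zero {a b c d : S}
    (hc : ∀ x, x ∈ Ideal.span {a} ↔ x * c = 0)
    (hd : ∀ x, x ∈ Ideal.span {b * c} ↔ x * d = 0) (x : S) :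
    x ∈ Ideal.span {a, b} ↔ x * (c * d) = 0 := by
  rw [Ideal.span, Submodule.mem_span_pair]
  constructor
  · rintro ⟨s, t, rfl⟩
    have hac : s * a * c = 0 := (hc _).1 (Ideal.mul_mem_left _ s (Ideal.mem_span_singleton_self a))
    have hbcd : t * (b * c) * d = 0 :=
      (hd _).1 (Ideal.mul_mem_left _ t (Ideal.mem_span_singleton_self _))
    calc (s • a + t • b) * (c * d) = s * a * c * d + t * (b * c) * d := by
          simp only [smul_eq_mul]; noncomm_ring
      _ = 0 := by rw [hac, hbcd, zero_mul, zero_add]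
  · intro hx
    obtain ⟨t, ht⟩ := Submodule.mem_span_singleton.1 ((hd (x * c)).2 (by rwa [mul_assoc]))
    have hxc : (x - t * b) * c = 0 := by
      rw [sub_mul, mul_assoc, ← smul_eq_mul t, ht, sub_self]
    obtain ⟨s, hs⟩ := Submodule.mem_span_singleton.1 ((hc _).2 hxc)
    exact ⟨s, t, by rw [hs, smul_eq_mul, sub_add_cancel]⟩

namespace IsLeftMorphicRing

variable (h : IsLeftMorphicRing S)
include h

theorem exists_mul_eq_zero_iff_mem_span (a : S) :
    ∃ c : S, ∀ x, x * a = 0 ↔ x ∈ Ideal.span {c} := by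
  obtain ⟨c, hc, -⟩ := h a
  exact ⟨c, fun x => (Set.ext_iff.1 hc x).trans <|
    (exists_congr fun _ => eq_comm).trans Ideal.mem_span_singleton'.symm⟩

theorem exists_mem_span_iff_mul_eq_zero (a : S) :
    ∃ c : S, ∀ x, x ∈ Ideal.span {a} ↔ x * c = 0 := by
  obtain ⟨c, -, hc⟩ := h a
  exact ⟨c, fun x => Ideal.mem_span_singleton'.trans <|
    (exists_congr fun _ => eq_comm).trans (Set.ext_iff.1 hc x).symm⟩

theorem span_pair_isPrincipal (a b : S) : (Ideal.span {a, b}).IsPrincipal := by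
  obtain ⟨c, hc⟩ := h.exists_mem_span_iff_mul_eq_zero a
  obtain ⟨d, hd⟩ := h.exists_mem_span_iff_mul_eq_zero (b * c)
  obtain ⟨e, he⟩ := h.exists_mul_eq_zero_iff_mem_span (c * d)
  exact ⟨e, Submodule.ext fun x => (mem_span_pair_iff_mul_eq_zero hc hd x).trans (he x)⟩

-- For a noncommutative `S`, `Ideal S` consists of left ideals: this is left Bézoutness.
theorem isBezout : IsBezout S := by
  refine ⟨fun I hI => Submodule.fg_induction (motive := fun I _ => I.IsPrincipal)
    (fun x => ⟨x, rfl⟩) ?_ I hI⟩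
  rintro _ _ - - ⟨x, rfl⟩ ⟨y, rfl⟩
  rw [← Submodule.span_insert]
  exact h.span_pair_isPrincipal x y

end IsLeftMorphicRing

end LeftAnnihilator

namespace TrivSqZeroExt

variable {R M : Type*} [Ring R] [AddCommGroup M] [Module R M] [Module Rᵐᵒᵖ M]

theorem mul_inr (s : TrivSqZeroExt R M) (m : M) :
    s * inr m = inr (s.fst • m) := by
  ext <;> simp

variable [SMulCommClass R Rᵐᵒᵖ M]

theorem coe_span_image_inr_subset (T : Set M) :
    (Ideal.span (inr '' T : Set (TrivSqZeroExt R M)) : Set (TrivSqZeroExt R M)) ⊆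
      inr '' (Submodule.span R T : Set M) := by
  intro z hz
  induction hz using Submodule.span_induction with
  | mem z hz =>
    obtain ⟨m, hm, rfl⟩ := hz
    exact ⟨m, Submodule.subset_span hm, rfl⟩
  | zero => exact ⟨0, zero_mem _, inr_zero R⟩
  | add _ _ _ _ hy hz =>
    obtain ⟨m, hm, rfl⟩ := hy
    obtain ⟨n, hn, rfl⟩ := hz
    exact ⟨m + n, add_mem hm hn, inr_add R m n⟩
  | smul s _ _ hz =>
    obtain ⟨m, hm, rfl⟩ := hz
    exact ⟨s.fst • m, Submodule.smul_mem _ _ hm, (mul_inr s m).symm⟩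

theorem mem_span_singleton_of_inr_mem_span {m w : M}
    (hw : (inr w : TrivSqZeroExt R M) ∈ Ideal.span {inr m}) : w ∈ R ∙ m := by
  obtain ⟨s, hs⟩ := Ideal.mem_span_singleton'.1 hw
  rw [mul_inr] at hs
  exact Submodule.mem_span_singleton.2 ⟨s.fst, inr_injective hs⟩

theorem span_eq_span_singleton_of_span_image_inr_eq {T : Set M} {m : M}
    (hT : Ideal.span (inr '' T : Set (TrivSqZeroExt R M)) = Ideal.span {inr m})
    (hm : m ∈ Submodule.span R T) : Submodule.span R T = R ∙ m := by
  refine le_antisymm (Submodule.span_le.2 fun w hw => ?_)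
    ((Submodule.span_singleton_le_iff_mem _ _).2 hm)
  exact mem_span_singleton_of_inr_mem_span (hT ▸ Ideal.subset_span ⟨w, hw, rfl⟩)

end TrivSqZeroExt

/-- If the trivial extension `R ⋉ M` is left morphic, then `M` is a Bézout left
`R`-module: every finitely generated left submodule of `M` is cyclic. -/
theorem stmt5 {R M : Type*} [Ring R] [AddCommGroup M] [Module R M] [Module Rᵐᵒᵖ M]
    [SMulCommClass R Rᵐᵒᵖ M] (h : IsLeftMorphicRing (TrivSqZeroExt R M)) :
    ∀ N : Submodule R M, N.FG → ∃ x : M, N = Submodule.span R ({x} : Set M) := by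
  rintro N ⟨T, rfl⟩
  have := h.isBezout
  obtain ⟨e, he⟩ := IsBezout.isPrincipal_of_FG (Ideal.span (inr '' (T : Set M)))
    (Submodule.fg_span (T.finite_toSet.image (inr (R := R))))
  have he_mem : e ∈ Ideal.span (inr '' (T : Set M)) := he ▸ Ideal.mem_span_singleton_self e
  obtain ⟨m, hm, rfl⟩ := coe_span_image_inr_subset (T : Set M) he_mem
  exact ⟨m, span_eq_span_singleton_of_span_image_inr_eq he hm⟩
end

section
/- Let R be a ring, σ an endomorphism of R, and S = R[t;σ]/(t²). If (0,a) (i.e., the element at) is left morphic in S, then a is von Neumann regular in R. -/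
/-- `R[t;σ]/(t²)`, the trivial extension `R ⋉ R(σ)`: pairs `(a, m)` with
multiplication `(a,m)(b,n) = (ab, an + mσ(b))`. -/
def SkewTriv (R : Type*) [Ring R] (σ : R →+* R) : Type _ := R × R

namespace SkewTriv

variable {R : Type*} [Ring R] {σ : R →+* R}

/-- The element `(a, m)` of `SkewTriv R σ`. -/
def mk (σ : R →+* R) (a m : R) : SkewTriv R σ := (a, m)

instance : AddCommGroup (SkewTriv R σ) := inferInstanceAs (AddCommGroup (R × R))

instance : Mul (SkewTriv R σ) :=
  ⟨fun x y => mk σ (x.1 * y.1) (x.1 * y.2 + x.2 * σ y.1)⟩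

instance : One (SkewTriv R σ) := ⟨mk σ 1 0⟩

theorem one_def : (1 : SkewTriv R σ) = mk σ 1 0 := rfl

theorem zero_def : (0 : SkewTriv R σ) = mk σ 0 0 := rfl

theorem mul_def (x y : SkewTriv R σ) :
    x * y = mk σ (x.1 * y.1) (x.1 * y.2 + x.2 * σ y.1) := rfl

theorem add_def (x y : SkewTriv R σ) :
    x + y = mk σ (x.1 + y.1) (x.2 + y.2) := rfl

instance : Ring (SkewTriv R σ) :=
  { (instAddCommGroup : AddCommGroup (SkewTriv R σ)), (instMul : Mul (SkewTriv R σ)),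
      (instOne : One (SkewTriv R σ)) with
    mul_assoc := by
      rintro ⟨a, m⟩ ⟨b, n⟩ ⟨c, p⟩
      (repeat erw [mul_def]); (repeat erw [add_def])
      apply Prod.ext <;>
        simp [mul_def, mk, mul_assoc, mul_add, add_mul, map_mul, add_assoc]
    one_mul := by
      rintro ⟨a, m⟩
      (repeat erw [one_def]); (repeat erw [mul_def])
      apply Prod.ext <;> simp [mul_def, one_def, mk]
    mul_one := by
      rintro ⟨a, m⟩
      (repeat erw [one_def]); (repeat erw [mul_def])
      apply Prod.ext <;> simp [mul_def, one_def, mk]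
    left_distrib := by
      rintro ⟨a, m⟩ ⟨b, n⟩ ⟨c, p⟩
      (repeat erw [mul_def]); (repeat erw [add_def])
      apply Prod.ext <;>
        simp [mul_def, add_def, mk, mul_add, add_mul, map_add] <;> abel
    right_distrib := by
      rintro ⟨a, m⟩ ⟨b, n⟩ ⟨c, p⟩
      (repeat erw [mul_def]); (repeat erw [add_def])
      apply Prod.ext <;>
        simp [mul_def, add_def, mk, mul_add, add_mul, map_add] <;> abel
    zero_mul := by
      rintro ⟨a, m⟩
      (repeat erw [zero_def]); (repeat erw [mul_def])
      apply Prod.ext <;> simp [mul_def, zero_def, mk]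
    mul_zero := by
      rintro ⟨a, m⟩
      (repeat erw [zero_def]); (repeat erw [mul_def])
      apply Prod.ext <;> simp [mul_def, zero_def, mk] }

end SkewTriv

/-- A ring `S` is left morphic at `x` if there is `y` with `ann_l(x) = Sy` and
`ann_l(y) = Sx`. -/
def IsLeftMorphicElem {S : Type*} [Ring S] (x : S) : Prop :=
  ∃ y : S, ({z : S | z * x = 0} = {z : S | ∃ w, z = w * y}) ∧
    ({z : S | z * y = 0} = {z : S | ∃ w, z = w * x})

/-!
Write the witness of morphicity as `(b, c)` and put `e = σ b`. Since `(0,1)` kills `(0,a)`, it lies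
in `S(b,c)`, which gives `w b = 0` and `w c + u e = 1`. Every left annihilator of `(b,c)` lies in
`S(0,a) = 0 × Ra`; applied to `(e w, e u - 1)` this forces `e w = 0`, hence `e u e = e`, and applied
to `(0, 1 - e u)` it gives `1 - e u = x a`. As `(0,a)` kills `(b,c)`, `a e = 0`, so
`a = a (1 - e u) = a x a`.
-/

theorem exists_eq_mul_mul_of_annihilator {R : Type*} [Ring R] {a b c e w u : R}
    (hae : a * e = 0) (hwb : w * b = 0) (hone : w * c + u * e = 1)
    (hann : ∀ w₁ w₂ : R, w₁ * b = 0 → w₁ * c + w₂ * e = 0 → w₁ = 0 ∧ ∃ r, w₂ = r * a) :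
    ∃ x, a = a * x * a := by
  have hew : e * w = 0 := by
    refine (hann (e * w) (e * u - 1) (by rw [mul_assoc, hwb, mul_zero]) ?_).1
    calc e * w * c + (e * u - 1) * e = e * (w * c + u * e) - e := by noncomm_ring
      _ = 0 := by rw [hone, mul_one, sub_self]
  have heue : e * u * e = e := by
    calc e * u * e = e * (w * c + u * e) := by rw [mul_add, ← mul_assoc, hew, zero_mul, zero_add,
          mul_assoc]
      _ = e := by rw [hone, mul_one]
  obtain ⟨-, x, hx⟩ := hann 0 (1 - e * u) (zero_mul b)
    (by rw [zero_mul, zero_add, sub_mul, one_mul, heue, sub_self])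
  refine ⟨x, ?_⟩
  calc a = a * (1 - e * u) := by rw [mul_sub, mul_one, ← mul_assoc, hae, zero_mul, sub_zero]
    _ = a * x * a := by rw [hx, mul_assoc]

namespace SkewTriv

variable {R : Type*} [Ring R] {σ : R →+* R}

theorem exists_eq_mk (x : SkewTriv R σ) : ∃ p q, x = mk σ p q := ⟨x.1, x.2, rfl⟩

@[simp]
theorem mk_mul_mk (p q r s : R) :
    mk σ p q * mk σ r s = mk σ (p * r) (p * s + q * σ r) := rfl

@[simp]
theorem mk_eq_mk_iff {p q r s : R} : mk σ p q = mk σ r s ↔ p = r ∧ q = s := Prod.ext_iff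

@[simp]
theorem mk_eq_zero_iff {p q : R} : mk σ p q = 0 ↔ p = 0 ∧ q = 0 := Prod.ext_iff

end SkewTriv

/-- If `(0,a)` (the element `at`) is left morphic in `R[t;σ]/(t²)`, then `a` is
von Neumann regular in `R`. -/
theorem stmt6 {R : Type*} [Ring R] (σ : R →+* R) (a : R)
    (h : IsLeftMorphicElem (SkewTriv.mk σ 0 a)) :
    ∃ x : R, a = a * x * a := by
  obtain ⟨y, hann_a, hann_y⟩ := h
  obtain ⟨b, c, rfl⟩ := SkewTriv.exists_eq_mk y
  have hae : a * σ b = 0 := by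
    have : SkewTriv.mk σ 0 a * SkewTriv.mk σ b c = 0 :=
      (Set.ext_iff.1 hann_y _).2 ⟨1, (one_mul _).symm⟩
    simpa using this
  obtain ⟨w, hw⟩ := (Set.ext_iff.1 hann_a (SkewTriv.mk σ 0 1)).1 (by simp)
  obtain ⟨w₁, w₂, rfl⟩ := SkewTriv.exists_eq_mk w
  simp only [SkewTriv.mk_mul_mk, SkewTriv.mk_eq_mk_iff] at hw
  refine exists_eq_mul_mul_of_annihilator hae hw.1.symm hw.2.symm fun v₁ v₂ hb hc => ?_
  obtain ⟨v, hv⟩ := (Set.ext_iff.1 hann_y (SkewTriv.mk σ v₁ v₂)).1 (by simp [hb, hc])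
  obtain ⟨r, s, rfl⟩ := SkewTriv.exists_eq_mk v
  simp only [SkewTriv.mk_mul_mk, SkewTriv.mk_eq_mk_iff, mul_zero, add_zero, map_zero] at hv
  exact ⟨hv.1, r, hv.2⟩
end

section
/- Let R be a ring and M a bimodule. If a ∈ R is von Neumann regular in R and (a,0) is left morphic in R ⋉ M, then a is unit regular in R (i.e., a = aua for some unit u of R). -/
/-!
`(a, 0)` is regular in `R ⋉ M` because `a` is, and `fst : R ⋉ M → R` maps units to units, so
it suffices to prove Ehrlich's theorem: a regular left morphic element `x` of a ring is unit
regular.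
Take a reflexive inverse `v` of `x` and `y` with `ann_l(x) = Sy`, `ann_l(y) = Sx`. As `1 - xv`
kills `x`, `1 - xv = by`, and `c = (1 - xv) b (1 - vx)` satisfies `cy = 1 - xv`, `yc = 1 - vx`.
Then `v + y` is a unit with inverse `x + c`, and `x (v + y) x = x`.
-/

open TrivSqZeroExt

def IsVonNeumannRegular {S : Type*} [Monoid S] (x : S) : Prop :=
  ∃ v : S, x = x * v * x

def IsUnitRegular {S : Type*} [Monoid S] (x : S) : Prop :=
  ∃ u : Sˣ, x = x * u * x

section Monoid

variable {S T F : Type*} [Monoid S] [Monoid T] [FunLike F S T] [MonoidHomClass F S T] {x : S}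

theorem IsVonNeumannRegular.map (f : F) (h : IsVonNeumannRegular x) :
    IsVonNeumannRegular (f x) := by
  obtain ⟨v, hv⟩ := h
  exact ⟨f v, by rw [← map_mul, ← map_mul, ← hv]⟩

theorem IsUnitRegular.map (f : F) (h : IsUnitRegular x) : IsUnitRegular (f x) := by
  obtain ⟨u, hu⟩ := h
  exact ⟨Units.map (f : S →* T) u, by rw [Units.coe_map, MonoidHom.coe_coe, ← map_mul,
    ← map_mul, ← hu]⟩

theorem IsVonNeumannRegular.exists_reflexive (h : IsVonNeumannRegular x) :
    ∃ v : S, x * v * x = x ∧ v * x * v = v := by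
  obtain ⟨v, hv⟩ := h
  refine ⟨v * x * v, ?_, ?_⟩
  · simp only [← mul_assoc, ← hv]
  · simp only [mul_assoc, ← hv]
    simp only [← mul_assoc, ← hv]

end Monoid

section Ring

variable {S : Type*} [Ring S] {x v y c : S}

theorem isUnitRegular_of_complement (hxvx : x * v * x = x) (hxy : x * y = 0) (hyx : y * x = 0)
    (hyc : y * c = 1 - v * x) (hcy : c * y = 1 - x * v) (hvc : v * c = 0) (hcv : c * v = 0) :
    IsUnitRegular x := by
  refine ⟨⟨v + y, x + c, ?_, ?_⟩, ?_⟩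
  · simp only [add_mul, mul_add, hvc, hyx, hyc, add_zero, zero_add, add_sub_cancel]
  · simp only [add_mul, mul_add, hxy, hcv, hcy, add_zero, zero_add, add_sub_cancel]
  · simp only [mul_add, add_mul, hxvx, mul_assoc, hyx, mul_zero, add_zero]

theorem IsLeftMorphicElem.isUnitRegular (hreg : IsVonNeumannRegular x)
    (hmor : IsLeftMorphicElem x) : IsUnitRegular x := by
  obtain ⟨v, hxvx, hvxv⟩ := hreg.exists_reflexive
  obtain ⟨y, hann_x, hann_y⟩ := hmor
  have ann_x (z : S) : z * x = 0 ↔ ∃ w, z = w * y := Set.ext_iff.mp hann_x z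
  have ann_y (z : S) : z * y = 0 ↔ ∃ w, z = w * x := Set.ext_iff.mp hann_y z
  have hyx : y * x = 0 := (ann_x y).2 ⟨1, (one_mul y).symm⟩
  have hxy : x * y = 0 := (ann_y x).2 ⟨1, (one_mul x).symm⟩
  have hv_compl : v * (1 - x * v) = 0 := by rw [mul_sub, mul_one, ← mul_assoc, hvxv, sub_self]
  have hcompl_v : (1 - v * x) * v = 0 := by rw [sub_mul, one_mul, hvxv, sub_self]
  obtain ⟨b, hb⟩ := (ann_x (1 - x * v)).1 (by rw [sub_mul, one_mul, hxvx, sub_self])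
  set c := (1 - x * v) * b * (1 - v * x) with hc
  have hcy : c * y = 1 - x * v := by
    have he : IsIdempotentElem (1 - x * v) := by
      refine IsIdempotentElem.one_sub ?_
      rw [IsIdempotentElem, ← mul_assoc, hxvx]
    have hfy : (1 - v * x) * y = y := by rw [sub_mul, one_mul, mul_assoc, hxy, mul_zero, sub_zero]
    calc c * y = (1 - x * v) * (b * y) := by rw [hc, mul_assoc _ (1 - v * x), hfy, mul_assoc]
      _ = 1 - x * v := by rw [← hb, he.eq]
  have hvc : v * c = 0 := by rw [hc, ← mul_assoc, ← mul_assoc, hv_compl, zero_mul, zero_mul]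
  have hcv : c * v = 0 := by rw [hc, mul_assoc, hcompl_v, mul_zero]
  -- `ann_l(y) = Sx` and `x (vx) = x`
  have eq_zero_of_mul_y_of_mul_vx (z : S) (hzy : z * y = 0) (hzf : z * (v * x) = 0) : z = 0 := by
    obtain ⟨w, rfl⟩ := (ann_y z).1 hzy
    rwa [mul_assoc, ← mul_assoc x, hxvx] at hzf
  have hyc : y * c = 1 - v * x := by
    refine sub_eq_zero.1 (eq_zero_of_mul_y_of_mul_vx _ ?_ ?_)
    · rw [sub_mul, mul_assoc, hcy, mul_sub, mul_one, ← mul_assoc, hyx, zero_mul, sub_zero,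
        sub_mul, one_mul, mul_assoc, hxy, mul_zero, sub_zero, sub_self]
    · rw [sub_mul, ← mul_assoc, mul_assoc y, hcv, mul_zero, zero_mul, ← mul_assoc, hcompl_v,
        zero_mul, sub_zero]
  exact isUnitRegular_of_complement hxvx hxy hyx hyc hcy hvc hcv

end Ring

/-- If `a ∈ R` is von Neumann regular in `R` and `(a,0)` is left morphic in the
trivial extension `R ⋉ M`, then `a` is unit regular in `R`. -/
theorem stmt7 {R M : Type*} [Ring R] [AddCommGroup M] [Module R M] [Module Rᵐᵒᵖ M]
    [SMulCommClass R Rᵐᵒᵖ M] (a : R) (hreg : ∃ x : R, a = a * x * a)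
    (hmor : IsLeftMorphicElem (inl a : TrivSqZeroExt R M)) :
    ∃ u : Rˣ, a = a * u * a :=
  (hmor.isUnitRegular (IsVonNeumannRegular.map (inlHom R M) hreg)).map (fstHom ℕ R M)
end

section
/- If R is a left perfect ring and M is a left R-module that is Bézout (every finitely generated submodule is cyclic), then M is noetherian and cyclic. -/
/-!
Write `J` for the Jacobson radical. The quotient `Q = M / J M` is again Bézout, and it is
annihilated by `J`, so each of its cyclic submodules is a quotient of `R / J`; since `R / J` is
semisimple and cyclic, it has finite length `L`. Thus every finitely generated submodule of `Q`
has length at most `L`, which forces `Q` to be finitely generated, hence cyclic, say generated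
by the image of `x`. Then `R x + J M = M`, and left T-nilpotency of `J` gives the form of
Nakayama's lemma needed for modules that are not finitely generated: `R x = M`.
Every submodule of `M` is Bézout as well, hence cyclic, so `M` is noetherian.
-/

/-- A ring `R` is left perfect if `R/J(R)` is semisimple (as a left `R`-module,
equivalently as a ring) and the Jacobson radical `J(R)` is left T-nilpotent. -/
def IsLeftPerfectRing (R : Type*) [Ring R] : Prop :=
  IsSemisimpleModule R (R ⧸ Ideal.jacobson (⊥ : Ideal R)) ∧
    ∀ f : ℕ → R, (∀ n, f n ∈ Ideal.jacobson (⊥ : Ideal R)) →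
      ∃ n : ℕ, ((List.range (n + 1)).map f).prod = 0

open Submodule

def IsBezoutModule (R M : Type*) [Semiring R] [AddCommMonoid M] [Module R M] : Prop :=
  ∀ N : Submodule R M, N.FG → ∃ x : M, N = span R ({x} : Set M)

def IsLeftTNilpotent {R : Type*} [Semiring R] (I : Ideal R) : Prop :=
  ∀ f : ℕ → R, (∀ n, f n ∈ I) → ∃ n : ℕ, ((List.range (n + 1)).map f).prod = 0

namespace IsBezoutModule

variable {R M N : Type*} [Semiring R] [AddCommMonoid M] [Module R M] [AddCommMonoid N]
  [Module R N]

theorem of_surjective (hM : IsBezoutModule R M) (f : M →ₗ[R] N) (hf : Function.Surjective f) :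
    IsBezoutModule R N := by
  rintro _ ⟨t, rfl⟩
  choose g hg using hf
  obtain ⟨x, hx⟩ := hM (span R (g '' t)) (fg_span (t.finite_toSet.image g))
  refine ⟨f x, ?_⟩
  rw [← Set.image_singleton, ← map_span, ← hx, map_span, Set.image_image]
  simp only [hg, Set.image_id']

theorem of_injective (hM : IsBezoutModule R M) (f : N →ₗ[R] M) (hf : Function.Injective f) :
    IsBezoutModule R N := by
  intro P hP
  obtain ⟨y, hy⟩ := hM (P.map f) (hP.map f)
  obtain ⟨x, rfl⟩ : y ∈ LinearMap.range f :=
    LinearMap.map_le_range (hy ▸ mem_span_singleton_self y)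
  refine ⟨x, map_injective_of_injective hf ?_⟩
  rw [hy, map_span, Set.image_singleton]

end IsBezoutModule

namespace IsLeftTNilpotent

theorem eq_bot_of_le_smul {R M : Type*} [Semiring R] [AddCommMonoid M] [Module R M]
    {I : Ideal R} (hI : IsLeftTNilpotent I) {N : Submodule R M} (hN : N ≤ I • N) : N = ⊥ := by
  by_contra hne
  obtain ⟨m₀, hm₀N, hm₀⟩ := N.ne_bot_iff.mp hne
  let S := {p : R × M // p.2 ∈ N ∧ p.1 • p.2 ≠ 0}
  -- write `m ∈ I • N` as a sum of terms `a • m'`: if `r • m ≠ 0`, some `r • (a • m')` is nonzero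
  have step : ∀ p : S, ∃ a ∈ I, ∃ q : S, q.1.1 = p.1.1 * a := by
    rintro ⟨⟨r, m⟩, hm, hrm⟩
    by_contra! h
    refine hrm (smul_induction_on (p := fun x => r • x = 0) (hN hm) (fun a ha n hn => ?_)
      fun x y hx hy => by rw [smul_add, hx, hy, add_zero])
    by_contra hran
    exact h a ha ⟨(r * a, n), hn, by rwa [mul_smul]⟩ rfl
  choose a ha next hnext using step
  let s : ℕ → S := fun n => next^[n] ⟨(1, m₀), hm₀N, by rwa [one_smul]⟩
  have hs : ∀ n, (s n).1.1 = ((List.range n).map fun k => a (s k)).prod := by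
    intro n
    induction n with
    | zero => rfl
    | succ n ih =>
      rw [List.prod_range_succ, ← ih, ← hnext]
      exact congrArg (fun p : S => p.1.1) (Function.iterate_succ_apply' next n _)
  obtain ⟨n, hn⟩ := hI (fun k => a (s k)) fun k => ha _
  exact (s (n + 1)).2.2 (by rw [hs, hn, zero_smul])

theorem eq_top_of_sup_smul_top_eq_top {R M : Type*} [Ring R] [AddCommGroup M] [Module R M]
    {I : Ideal R} (hI : IsLeftTNilpotent I) {N : Submodule R M} (hN : I • ⊤ ⊔ N = ⊤) :
    N = ⊤ := by
  refine Submodule.Quotient.subsingleton_iff.mp ((Submodule.subsingleton_iff R).mp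
    (subsingleton_iff_bot_eq_top.mp ?_))
  refine (hI.eq_bot_of_le_smul (N := ⊤) ?_).symm
  rw [← range_mkQ N, LinearMap.range_eq_map]
  conv_lhs => rw [← hN, Submodule.map_sup, map_smul'', mkQ_map_self, sup_bot_eq]

end IsLeftTNilpotent

section Length

variable {R M : Type*} [Ring R] [AddCommGroup M] [Module R M]

theorem Module.length_span_singleton_le {I : Ideal R} {x : M} (hI : I ≤ Ideal.torsionOf R M x) :
    Module.length R (span R {x}) ≤ Module.length R (R ⧸ I) := by
  rw [← (Ideal.quotTorsionOfEquivSpanSingleton R M x).length_eq, Module.length_quotient,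
    Module.length_quotient]
  exact Order.coheight_anti hI

theorem Module.Finite.of_forall_fg_length_le {L : ℕ}
    (h : ∀ U : Submodule R M, U.FG → Module.length R U ≤ L) : Module.Finite R M := by
  by_contra hM
  have hchain : ∀ n : ℕ, ∃ U : Submodule R M, U.FG ∧ (n : ℕ∞) ≤ Order.height U := by
    intro n
    induction n with
    | zero => exact ⟨⊥, fg_bot, by simp⟩
    | succ n ih =>
      obtain ⟨U, hU, hn⟩ := ih
      obtain ⟨x, -, hx⟩ := SetLike.exists_of_lt (lt_top_iff_ne_top.mpr fun h => hM ⟨h ▸ hU⟩)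
      have hlt : U < U ⊔ span R {x} := left_lt_sup.mpr (by rwa [span_singleton_le_iff_mem])
      have hfin : Order.height U ≠ ⊤ := by
        rw [← Module.length_submodule]
        exact ((h U hU).trans_lt (ENat.natCast_lt_top L)).ne
      refine ⟨U ⊔ span R {x}, hU.sup (fg_span_singleton x), ?_⟩
      calc ((n + 1 : ℕ) : ℕ∞) ≤ Order.height U + 1 := by push_cast; gcongr
        _ ≤ Order.height (U ⊔ span R {x}) :=
          (ENat.add_one_le_iff hfin).mpr (Order.height_strictMono hlt hfin.lt_top)
  obtain ⟨U, hU, hLU⟩ := hchain (L + 1)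
  have hLL : ((L + 1 : ℕ) : ℕ∞) ≤ L := hLU.trans (Module.length_submodule (N := U) ▸ h U hU)
  norm_cast at hLL
  omega

end Length

theorem IsBezoutModule.exists_span_singleton_eq_top {R M : Type*} [Ring R] [AddCommGroup M]
    [Module R M] (hR : IsLeftPerfectRing R) (hM : IsBezoutModule R M) :
    ∃ x : M, span R {x} = ⊤ := by
  set J := Ideal.jacobson (⊥ : Ideal R)
  have : IsSemisimpleModule R (R ⧸ J) := hR.1
  set JM : Submodule R M := J • ⊤
  have hQ : IsBezoutModule R (M ⧸ JM) := hM.of_surjective _ JM.mkQ_surjective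
  have hJQ : ∀ q : M ⧸ JM, J ≤ Ideal.torsionOf R _ q := by
    rintro ⟨m⟩ a ha
    exact (Ideal.mem_torsionOf_iff _ a).mpr <|
      (Quotient.mk_eq_zero _).mpr (smul_mem_smul ha mem_top)
  have : Module.Finite R (M ⧸ JM) := by
    obtain ⟨L, hL⟩ := ENat.ne_top_iff_exists.mp (Module.length_ne_top (R := R) (M := R ⧸ J))
    refine .of_forall_fg_length_le (L := L) fun U hU => ?_
    obtain ⟨q, rfl⟩ := hQ U hU
    exact hL ▸ Module.length_span_singleton_le (hJQ q)
  obtain ⟨q, hq⟩ := hQ ⊤ Module.Finite.fg_top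
  obtain ⟨x, rfl⟩ := JM.mkQ_surjective q
  refine ⟨x, IsLeftTNilpotent.eq_top_of_sup_smul_top_eq_top hR.2 ?_⟩
  rw [← comap_map_mkQ, map_span, Set.image_singleton, ← hq, comap_top]

/-- If `R` is a left perfect ring and `M` is a Bézout left `R`-module (every finitely
generated submodule is cyclic), then `M` is noetherian and cyclic. -/
theorem stmt12 {R M : Type*} [Ring R] [AddCommGroup M] [Module R M]
    (hR : IsLeftPerfectRing R)
    (hbez : ∀ N : Submodule R M, N.FG → ∃ x : M, N = Submodule.span R ({x} : Set M)) :
    IsNoetherian R M ∧ ∃ x : M, Submodule.span R ({x} : Set M) = ⊤ := by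
  have hM : IsBezoutModule R M := hbez
  refine ⟨isNoetherian_def.mpr fun N => ?_, hM.exists_span_singleton_eq_top hR⟩
  obtain ⟨x, hx⟩ :=
    (hM.of_injective N.subtype N.injective_subtype).exists_span_singleton_eq_top hR
  rw [← Submodule.fg_top, ← hx]
  exact fg_span_singleton x
end

section
/- If R is a left perfect ring and M is an (R,R)-bimodule, then the trivial extension R ⋉ M is left perfect. -/
open TrivSqZeroExt

/-- Noncommutative characterization of the Jacobson radical via units. -/
lemma mem_jacobson_bot_iff_isUnit {A : Type*} [Ring A] {x : A} :
    x ∈ Ideal.jacobson (⊥ : Ideal A) ↔ ∀ y : A, IsUnit (y * x + 1) := by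
  rw [Ideal.mem_jacobson_iff]
  constructor
  · intro h y
    obtain ⟨z, hz⟩ := h y
    rw [Ideal.mem_bot] at hz
    have hz1 : z * (y * x + 1) = 1 := by
      rw [show z * (y * x + 1) = z * y * x + z - 1 + 1 by noncomm_ring, hz, zero_add]
    obtain ⟨w, hw⟩ := h (-(z * y))
    rw [Ideal.mem_bot] at hw
    have hsum : z * y * x + z = 1 := sub_eq_zero.mp hz
    have hzeq : -(z * y) * x + 1 = z := by
      rw [← hsum]; noncomm_ring
    have hw1 : w * z = 1 := by
      have : w * (-(z * y) * x + 1) = 1 := by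
        rw [show w * (-(z * y) * x + 1) = w * -(z * y) * x + w - 1 + 1 by noncomm_ring, hw,
          zero_add]
      rwa [hzeq] at this
    -- `z` is a two-sided inverse of `y*x+1`
    have hu : (y * x + 1) * z = 1 := by
      have : w = y * x + 1 := by
        calc w = w * (z * (y * x + 1)) := by rw [hz1, mul_one]
          _ = w * z * (y * x + 1) := by rw [mul_assoc]
          _ = y * x + 1 := by rw [hw1, one_mul]
      rw [← this, ← hw1]
    exact ⟨⟨y * x + 1, z, hu, hz1⟩, rfl⟩
  · intro h y
    refine ⟨↑(h y).unit⁻¹, ?_⟩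
    rw [Ideal.mem_bot]
    have h1 : (↑(h y).unit⁻¹ : A) * (y * x + 1) = 1 := by
      nth_rewrite 2 [← (h y).unit_spec]
      exact (h y).unit.inv_mul
    rw [show (↑(h y).unit⁻¹ : A) * y * x + ↑(h y).unit⁻¹ - 1
      = (↑(h y).unit⁻¹ : A) * (y * x + 1) - 1 by noncomm_ring, h1, sub_self]

lemma mem_jacobson_tsze_iff {R M : Type*} [Ring R] [AddCommGroup M] [Module R M]
    [Module Rᵐᵒᵖ M] [SMulCommClass R Rᵐᵒᵖ M] {x : TrivSqZeroExt R M} :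
    x ∈ Ideal.jacobson (⊥ : Ideal (TrivSqZeroExt R M)) ↔
      x.fst ∈ Ideal.jacobson (⊥ : Ideal R) := by
  rw [mem_jacobson_bot_iff_isUnit, mem_jacobson_bot_iff_isUnit]
  constructor
  · intro h y
    have := h (inl y)
    rw [isUnit_iff_isUnit_fst] at this
    simpa using this
  · intro h y
    rw [isUnit_iff_isUnit_fst]
    simpa using h y.fst

/-- `fst` as a ring homomorphism. -/
def fstRingHom (R M : Type*) [Ring R] [AddCommGroup M] [Module R M]
    [Module Rᵐᵒᵖ M] [SMulCommClass R Rᵐᵒᵖ M] : TrivSqZeroExt R M →+* R where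
  toFun := fst
  map_one' := fst_one
  map_mul' := fst_mul
  map_zero' := fst_zero (M := M)
  map_add' := fst_add

/-- If `R` is a left perfect ring and `M` is an `(R,R)`-bimodule, then the trivial
extension `R ⋉ M` is left perfect. -/
theorem stmt13 {R M : Type*} [Ring R] [AddCommGroup M] [Module R M] [Module Rᵐᵒᵖ M]
    [SMulCommClass R Rᵐᵒᵖ M] (hR : IsLeftPerfectRing R) :
    IsLeftPerfectRing (TrivSqZeroExt R M) := by
  set S := TrivSqZeroExt R M
  set JR := Ideal.jacobson (⊥ : Ideal R) with hJR
  set JS := Ideal.jacobson (⊥ : Ideal S) with hJS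
  constructor
  · -- semisimplicity of S ⧸ J(S)
    haveI : RingHomSurjective (fstRingHom R M) :=
      ⟨fun r => ⟨inl r, fst_inl M r⟩⟩
    -- the semilinear map S → R ⧸ JR
    let g : S →ₛₗ[fstRingHom R M] (R ⧸ JR) :=
      { toFun := fun s => Submodule.Quotient.mk s.fst
        map_add' := fun s t => by show Submodule.Quotient.mk (fst (s + t)) = _; rw [fst_add]; exact Submodule.Quotient.mk_add JR
        map_smul' := fun t s => by
          show Submodule.Quotient.mk (fst (t * s)) = _
          rw [fst_mul]
          rfl }
    have hker : ∀ s : S, g s = 0 ↔ s ∈ JS := by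
      intro s
      show Submodule.Quotient.mk s.fst = 0 ↔ _
      rw [Submodule.Quotient.mk_eq_zero, hJS, mem_jacobson_tsze_iff]
    have hle : JS ≤ LinearMap.ker g := fun s hs => (hker s).mpr hs
    let l : (S ⧸ JS) →ₛₗ[fstRingHom R M] (R ⧸ JR) := JS.liftQ g hle
    have hbij : Function.Bijective l := by
      constructor
      · rw [← LinearMap.ker_eq_bot, Submodule.ker_liftQ_eq_bot]
        intro s hs
        exact (hker s).mp hs
      · intro y
        obtain ⟨r, rfl⟩ := Submodule.Quotient.mk_surjective _ y
        exact ⟨Submodule.Quotient.mk (inl r), by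
          show g (inl r) = _
          show Submodule.Quotient.mk (fst (inl r : S)) = _
          rw [fst_inl]⟩
    exact (LinearMap.isSemisimpleModule_iff_of_bijective l hbij).mpr hR.1
  · -- left T-nilpotence of J(S)
    intro f hf
    have ha : ∀ n, (f n).fst ∈ JR := fun n => mem_jacobson_tsze_iff.mp (hf n)
    obtain ⟨n₁, h1⟩ := hR.2 (fun n => (f n).fst) (fun n => ha n)
    obtain ⟨n₂, h2⟩ := hR.2 (fun i => (f (n₁ + 1 + i)).fst) (fun i => ha _)
    refine ⟨n₁ + 1 + n₂, ?_⟩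
    have hsplit : ((List.range (n₁ + 1 + n₂ + 1)).map f).prod
        = ((List.range (n₁ + 1)).map f).prod
          * ((List.range (n₂ + 1)).map (fun i => f (n₁ + 1 + i))).prod := by
      rw [show n₁ + 1 + n₂ + 1 = (n₁ + 1) + (n₂ + 1) by omega, List.range_add,
        List.map_append, List.prod_append, List.map_map]
      rfl
    have hfst1 : (((List.range (n₁ + 1)).map f).prod).fst = 0 := by
      rw [fst_list_prod, List.map_map]
      exact h1
    have hfst2 : (((List.range (n₂ + 1)).map (fun i => f (n₁ + 1 + i))).prod).fst = 0 := by
      rw [fst_list_prod, List.map_map]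
      exact h2
    rw [hsplit]
    apply TrivSqZeroExt.ext
    · rw [fst_mul, hfst1, zero_mul, fst_zero]
    · rw [snd_mul, hfst1, hfst2, snd_zero]
      simp
end

section
/- Let R be a commutative Bézout ring with total quotient ring Q. For any element x = class of p/q in Q/R (p ∈ R, q a nonzerodivisor), ann^R(x) is a principal ideal Rq' and ann^{Q/R}(q') = Rx for a suitable nonzerodivisor q'; in particular, if gcd conditions allow pR + qR = R, then ann^R(x) = Rq and ann^{Q/R}(q) = Rx. -/
/-!
Dividing `p` and `q` by a gcd `d` (a nonzerodivisor, as it divides `q`) reduces everything to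
the case `a p + b q = 1`. Then `r • (p / q) ∈ R` gives `q ∣ r p`, hence `q ∣ r`; and if
`q z = u ∈ R` then `z = (a u) • (p / q) + b u`, so the class of `z` is a multiple of `x`.
-/

open Function nonZeroDivisors

section QuotientByBase

variable {R S : Type*} [CommRing R] [Ring S] [Algebra R S] {p q : R} {w : S}

theorem smul_mk_eq_zero_iff_dvd_of_isCoprime (hinj : Injective (algebraMap R S))
    (hw : q • w = algebraMap R S p) (hpq : IsCoprime p q) (r : R) :
    r • (Submodule.Quotient.mk w : S ⧸ LinearMap.range (Algebra.linearMap R S)) = 0 ↔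
      q ∣ r := by
  rw [← Submodule.Quotient.mk_smul, Submodule.Quotient.mk_eq_zero]
  constructor
  · rintro ⟨s, hs⟩
    have hrp : r * p = q * s := hinj <| by
      rw [map_mul, map_mul, ← Algebra.smul_def, ← Algebra.smul_def, ← hw, smul_comm, ← hs]
      rfl
    exact hpq.symm.dvd_of_dvd_mul_right ⟨s, hrp⟩
  · rintro ⟨c, rfl⟩
    exact ⟨c * p, by
      rw [Algebra.linearMap_apply, map_mul, ← Algebra.smul_def, ← hw, mul_smul, smul_comm]⟩

theorem exists_eq_smul_mk_of_isCoprime_of_smul_eq_zero (hw : q • w = algebraMap R S p)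
    (hpq : IsCoprime p q)
    {y : S ⧸ LinearMap.range (Algebra.linearMap R S)} (hy : q • y = 0) :
    ∃ r : R, y = r • Submodule.Quotient.mk w := by
  obtain ⟨a, b, hab⟩ := hpq
  obtain ⟨z, rfl⟩ := Submodule.Quotient.mk_surjective _ y
  rw [← Submodule.Quotient.mk_smul, Submodule.Quotient.mk_eq_zero] at hy
  obtain ⟨u, hu⟩ := hy
  rw [Algebra.linearMap_apply] at hu
  -- `p z = (q w) z = w (q z) = u w`
  have hpz : p • z = u • w := by
    rw [Algebra.smul_def, ← hw, smul_mul_assoc, ← mul_smul_comm, ← hu, ← Algebra.commutes,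
      ← Algebra.smul_def]
  refine ⟨a * u, (Submodule.Quotient.eq _).mpr ⟨b * u, ?_⟩⟩
  symm
  calc z - (a * u) • w = (a * p + b * q) • z - (a * u) • w := by rw [hab, one_smul]
    _ = b • q • z := by rw [add_smul, mul_smul, mul_smul, hpz, mul_smul]; abel
    _ = Algebra.linearMap R S (b * u) := by
      rw [Algebra.linearMap_apply, map_mul, hu, ← Algebra.smul_def]

theorem annihilators_mk_of_isCoprime (hinj : Injective (algebraMap R S))
    (hw : q • w = algebraMap R S p) (hpq : IsCoprime p q) :
    let x : S ⧸ LinearMap.range (Algebra.linearMap R S) := Submodule.Quotient.mk w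
    {r : R | r • x = 0} = {r : R | ∃ s : R, r = s * q} ∧
      {y | q • y = 0} = {y | ∃ r : R, y = r • x} := by
  refine ⟨Set.ext fun r ↦ (smul_mk_eq_zero_iff_dvd_of_isCoprime hinj hw hpq r).trans
    dvd_iff_exists_eq_mul_left,
    Set.ext fun y ↦ ⟨exists_eq_smul_mk_of_isCoprime_of_smul_eq_zero hw hpq, ?_⟩⟩
  rintro ⟨r, rfl⟩
  have hp : (Submodule.Quotient.mk (algebraMap R S p) :
      S ⧸ LinearMap.range (Algebra.linearMap R S)) = 0 :=
    (Submodule.Quotient.mk_eq_zero _).mpr (LinearMap.mem_range_self _ p)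
  rw [Set.mem_ofPred_eq, smul_comm, ← Submodule.Quotient.mk_smul, hw, hp, smul_zero]

end QuotientByBase

theorem IsBezout.exists_reduced_factors {R : Type*} [CommRing R] [IsBezout R] (p : R) {q : R}
    (hq : q ∈ R⁰) :
    ∃ d p' q', p = d * p' ∧ q = d * q' ∧ q' ∈ R⁰ ∧ IsCoprime p' q' := by
  obtain ⟨p', hp'⟩ := gcd_dvd_left p q
  obtain ⟨q', hq'⟩ := gcd_dvd_right p q
  obtain ⟨a, b, hab⟩ := gcd_eq_sum p q
  obtain ⟨hd, hq'_mem⟩ := mul_mem_nonZeroDivisors.mp (hq' ▸ hq)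
  refine ⟨gcd p q, p', q', hp', hq', hq'_mem, a, b, ?_⟩
  refine sub_eq_zero.mp <| mem_nonZeroDivisors_iff_right.mp hd _ ?_
  linear_combination hab - a * hp' - b * hq'

theorem Localization.smul_mk_self {R : Type*} [CommRing R] {M : Submonoid R} (p : R) (q : M) :
    (q : R) • Localization.mk p q = algebraMap R (Localization M) p := by
  rw [Localization.mk_eq_mk'_apply, IsLocalization.smul_mk', IsLocalization.mk'_mul_cancel_left]

/-- Let `R` be a commutative Bézout ring with total quotient ring `Q`, and let
`x = p/q mod R ∈ Q/R` with `q` a nonzerodivisor.  Then there is a nonzerodivisor `q'`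
with `ann^R(x) = Rq'` and `ann^{Q/R}(q') = Rx`; and moreover if `pR + qR = R` then
`ann^R(x) = Rq` and `ann^{Q/R}(q) = Rx`. -/
theorem stmt15 {R : Type*} [CommRing R] [IsBezout R]
    (p : R) (q : R) (hq : q ∈ nonZeroDivisors R) :
    let Q := Localization (nonZeroDivisors R)
    let N : Submodule R Q := LinearMap.range (Algebra.linearMap R Q)
    let x : Q ⧸ N := Submodule.Quotient.mk (Localization.mk p ⟨q, hq⟩)
    (∃ q' ∈ nonZeroDivisors R,
        ({r : R | r • x = 0} = {r : R | ∃ s : R, r = s * q'}) ∧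
          ({y : Q ⧸ N | q' • y = 0} = {y : Q ⧸ N | ∃ r : R, y = r • x})) ∧
      (Ideal.span ({p, q} : Set R) = ⊤ →
        ({r : R | r • x = 0} = {r : R | ∃ s : R, r = s * q}) ∧
          ({y : Q ⧸ N | q • y = 0} = {y : Q ⧸ N | ∃ r : R, y = r • x})) := by
  intro Q N x
  have hinj := IsLocalization.injective Q (le_refl R⁰)
  obtain ⟨d, p', q', hp, hq_eq, hq', hpq'⟩ := IsBezout.exists_reduced_factors p hq
  have hx : Localization.mk p ⟨q, hq⟩ = Localization.mk p' ⟨q', hq'⟩ := by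
    simp only [Localization.mk_eq_mk'_apply]
    exact IsLocalization.mk'_eq_of_eq (show q * p' = q' * p by rw [hp, hq_eq]; ring)
  refine ⟨⟨q', hq', ?_⟩, fun hspan ↦ ?_⟩
  · simp only [x, hx]
    exact annihilators_mk_of_isCoprime hinj (Localization.smul_mk_self p' ⟨q', hq'⟩) hpq'
  · have hpq : IsCoprime p q := by
      rwa [← Ideal.sup_eq_top_iff_isCoprime, ← Ideal.span_insert]
    exact annihilators_mk_of_isCoprime hinj (Localization.smul_mk_self p ⟨q, hq⟩) hpq
end

section
/- Let R be a commutative reduced Bézout ring in which the annihilator of every element is a principal ideal. Then R is a weak Baer ring: the annihilator of every element is generated by an idempotent. -/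
/-- Let `R` be a commutative reduced Bézout ring in which the annihilator of every
element is a principal ideal.  Then `R` is weak Baer: the annihilator of every
element is generated by an idempotent. -/
theorem stmt16 {R : Type*} [CommRing R] [IsReduced R] [IsBezout R]
    (h : ∀ a : R, ∃ b : R, {r : R | r * a = 0} = {r : R | ∃ s : R, r = s * b}) :
    ∀ a : R, ∃ e : R, IsIdempotentElem e ∧
      {r : R | r * a = 0} = {r : R | ∃ s : R, r = s * e} := by
  intro a
  obtain ⟨b, hb⟩ := h a
  have hmem : ∀ r : R, r * a = 0 ↔ ∃ s : R, r = s * b := fun r => Set.ext_iff.mp hb r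
  have hba : b * a = 0 := (hmem b).mpr ⟨1, (one_mul b).symm⟩
  -- Bézout: span {a, b} is principal
  have hfg : (Ideal.span ({a, b} : Set R)).FG := Submodule.fg_span (Set.toFinite _)
  obtain ⟨d, hd⟩ := (IsBezout.isPrincipal_of_FG _ hfg).principal
  have ha' : a ∈ Submodule.span R ({d} : Set R) := by
    exact hd ▸ Ideal.subset_span (Set.mem_insert a {b})
  have hb' : b ∈ Submodule.span R ({d} : Set R) := by
    exact hd ▸ Ideal.subset_span (Set.mem_insert_of_mem a rfl)
  obtain ⟨a₁, ha₁⟩ := Ideal.mem_span_singleton'.mp ha'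
  obtain ⟨b₁, hb₁⟩ := Ideal.mem_span_singleton'.mp hb'
  have hd' : d ∈ Ideal.span ({a, b} : Set R) := by
    rw [hd]; exact Ideal.subset_span rfl
  obtain ⟨x, y, hxy⟩ := Ideal.mem_span_pair.mp hd'
  -- d is regular
  have hreg : ∀ r : R, r * d = 0 → r = 0 := by
    intro r hr
    have hra : r * a = 0 := by rw [← ha₁]; linear_combination a₁ * hr
    obtain ⟨s, hs⟩ := (hmem r).mp hra
    have hrb : r * b = 0 := by rw [← hb₁]; linear_combination b₁ * hr
    have : r ^ 2 = 0 := by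
      have : r * r = 0 := by linear_combination r * hs + s * hrb
      rw [sq]; exact this
    exact IsReduced.eq_zero r ⟨2, this⟩
  -- a₁ * b₁ * d = 0
  have key : a₁ * b₁ * d = 0 := by
    apply hreg
    have : a * b = 0 := by linear_combination hba
    rw [← ha₁, ← hb₁] at this
    linear_combination this
  have hb₁a : b₁ * a = 0 := by rw [← ha₁]; linear_combination key
  obtain ⟨t, ht⟩ := (hmem b₁).mp hb₁a
  -- b = t*y*b*b
  have hbb : b = (t * y) * b * b := by
    have : b = b₁ * d := hb₁.symm
    rw [ht] at this
    rw [← hxy] at this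
    linear_combination this + t * x * hba
  refine ⟨t * y * b, ?_, ?_⟩
  · show (t * y * b) * (t * y * b) = t * y * b
    linear_combination (t * y) * hbb.symm
  · rw [hb]
    ext r
    simp only [Set.mem_setOf_eq]
    constructor
    · rintro ⟨s, rfl⟩
      exact ⟨s * b, by linear_combination s * hbb⟩
    · rintro ⟨s, rfl⟩
      exact ⟨s * (t * y), by ring⟩
end

section
/- If R is a commutative Bézout domain with quotient field Q, then the trivial extension R ⋉ (Q/R) is a morphic ring. -/
open TrivSqZeroExt

/-- The `R`-module `Q/R`, where `Q` is the total quotient ring (for a domain, the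
field of fractions) of the commutative ring `R`.  Since `R` is commutative this is a
symmetric `(R,R)`-bimodule. -/
abbrev QuotModR (R : Type*) [CommRing R] : Type _ :=
  (Localization (nonZeroDivisors R)) ⧸
    LinearMap.range (Algebra.linearMap R (Localization (nonZeroDivisors R)))

/-- A commutative ring `S` is morphic if every element `x` admits `y` with
`ann(x) = Sy` and `ann(y) = Sx`. -/
def IsMorphicRing (S : Type*) [Ring S] : Prop :=
  ∀ x : S, ∃ y : S, ({z : S | z * x = 0} = {z : S | ∃ w, z = w * y}) ∧
    ({z : S | z * y = 0} = {z : S | ∃ w, z = w * x})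

section Aux

set_option linter.unusedSectionVars false

variable {R : Type*} [CommRing R] [IsDomain R]

private theorem map_ne_zero' {a : R} (ha : a ≠ 0) :
    algebraMap R (Localization (nonZeroDivisors R)) a ≠ 0 := fun h =>
  ha (IsFractionRing.injective R (Localization (nonZeroDivisors R)) (by simpa using h))

private theorem mk_eq_zero_iff' (q : Localization (nonZeroDivisors R)) :
    (Submodule.Quotient.mk q : QuotModR R) = 0 ↔
      ∃ r : R, algebraMap R (Localization (nonZeroDivisors R)) r = q := by
  rw [Submodule.Quotient.mk_eq_zero]
  simp [LinearMap.mem_range, Algebra.linearMap_apply]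

private theorem smul_mk' (r : R) (q : Localization (nonZeroDivisors R)) :
    r • (Submodule.Quotient.mk q : QuotModR R) =
      Submodule.Quotient.mk (algebraMap R (Localization (nonZeroDivisors R)) r * q) := by
  rw [← Submodule.Quotient.mk_smul, Algebra.smul_def]

private theorem divisible' {a : R} (ha : a ≠ 0) (m : QuotModR R) : ∃ m', a • m' = m := by
  obtain ⟨q, rfl⟩ := Submodule.Quotient.mk_surjective _ m
  refine ⟨Submodule.Quotient.mk ((algebraMap R (Localization (nonZeroDivisors R)) a)⁻¹ * q), ?_⟩
  rw [smul_mk', ← mul_assoc, mul_inv_cancel₀ (map_ne_zero' ha), one_mul]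

private theorem coprime_rep [IsBezout R] (q : Localization (nonZeroDivisors R)) :
    ∃ u v : R, v ≠ 0 ∧ IsCoprime u v ∧
      algebraMap R (Localization (nonZeroDivisors R)) u /
        algebraMap R (Localization (nonZeroDivisors R)) v = q := by
  obtain ⟨u₀, v₀, hv₀, h⟩ := IsFractionRing.div_surjective (A := R) q
  have hv₀' : v₀ ≠ 0 := nonZeroDivisors.ne_zero hv₀
  obtain ⟨u, hu⟩ := IsBezout.gcd_dvd_left u₀ v₀
  obtain ⟨v, hv⟩ := IsBezout.gcd_dvd_right u₀ v₀
  obtain ⟨s, t, hst⟩ := IsBezout.gcd_eq_sum u₀ v₀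
  set d := IsBezout.gcd u₀ v₀ with hd_def
  have hd : d ≠ 0 := fun h0 => hv₀' (by rw [hv, h0, zero_mul])
  have hv' : v ≠ 0 := fun h0 => hv₀' (by rw [hv, h0, mul_zero])
  have hco : IsCoprime u v := by
    refine ⟨s, t, mul_left_cancel₀ hd ?_⟩
    rw [mul_one]
    calc d * (s * u + t * v) = s * (d * u) + t * (d * v) := by ring
    _ = s * u₀ + t * v₀ := by rw [← hu, ← hv]
    _ = d := hst
  refine ⟨u, v, hv', hco, ?_⟩
  rw [← h, hu, hv, map_mul, map_mul, mul_div_mul_left _ _ (map_ne_zero' hd)]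

end Aux

set_option maxHeartbeats 1000000

/-- If `R` is a commutative Bézout domain with quotient field `Q`, then the trivial
extension `R ⋉ (Q/R)` is a morphic ring. -/
theorem stmt17 (R : Type*) [CommRing R] [IsDomain R] [IsBezout R] :
    IsMorphicRing (TrivSqZeroExt R (QuotModR R)) := by
  classical
  intro x
  have hsnd : ∀ z w : TrivSqZeroExt R (QuotModR R),
      (z * w).snd = z.fst • w.snd + w.fst • z.snd := fun z w => by
    rw [snd_mul, op_smul_eq_smul]
  by_cases ha : x.fst = 0
  · -- case `a = 0`: partner is `inl v` where `x.snd = mk (u/v)`, `u, v` coprime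
    obtain ⟨q, hq⟩ := Submodule.Quotient.mk_surjective _ x.snd
    obtain ⟨u, v, hv, hco, hq'⟩ := coprime_rep q
    obtain ⟨s, t, hst⟩ := id hco
    have key1 : ∀ r : R, r • x.snd = 0 ↔ v ∣ r := by
      intro r
      rw [← hq, smul_mk', mk_eq_zero_iff']
      constructor
      · rintro ⟨c, hc⟩
        have h2 : c * v = r * u := by
          apply IsFractionRing.injective R (Localization (nonZeroDivisors R))
          rw [map_mul, map_mul, hc, ← hq', mul_assoc,
            div_mul_cancel₀ _ (map_ne_zero' hv)]
        exact hco.symm.dvd_of_dvd_mul_right ⟨c, by rw [← h2]; ring⟩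
      · rintro ⟨c, rfl⟩
        refine ⟨c * u, ?_⟩
        rw [← hq', map_mul, map_mul]
        field_simp [map_ne_zero' hv]
    have hvx : v • x.snd = 0 := (key1 v).mpr dvd_rfl
    have key2 : ∀ m : QuotModR R, v • m = 0 ↔ ∃ c : R, m = c • x.snd := by
      intro m
      obtain ⟨p, rfl⟩ := Submodule.Quotient.mk_surjective _ m
      constructor
      · intro h
        rw [smul_mk', mk_eq_zero_iff'] at h
        obtain ⟨c, hc⟩ := h
        refine ⟨c * s, ?_⟩
        rw [← hq, smul_mk', Submodule.Quotient.eq]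
        refine LinearMap.mem_range.mpr ⟨c * t, ?_⟩
        rw [Algebra.linearMap_apply, ← hq']
        have hp : p = algebraMap R (Localization (nonZeroDivisors R)) c /
            algebraMap R (Localization (nonZeroDivisors R)) v := by
          rw [eq_div_iff (map_ne_zero' hv), mul_comm, ← hc]
        have hst' : algebraMap R (Localization (nonZeroDivisors R)) s *
            algebraMap R (Localization (nonZeroDivisors R)) u +
            algebraMap R (Localization (nonZeroDivisors R)) t *
            algebraMap R (Localization (nonZeroDivisors R)) v = 1 := by
          rw [← map_mul, ← map_mul, ← map_add, hst, map_one]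
        rw [hp, map_mul, map_mul]
        field_simp [map_ne_zero' hv]
        linear_combination algebraMap R (Localization (nonZeroDivisors R)) c * hst'
      · rintro ⟨c, hcc⟩
        rw [hcc, ← mul_smul, mul_comm, mul_smul, hvx, smul_zero]
    refine ⟨inl v, ?_, ?_⟩
    · ext z
      simp only [Set.mem_setOf_eq]
      constructor
      · intro hz
        have h2 : z.fst • x.snd = 0 := by
          have h := congrArg TrivSqZeroExt.snd hz
          rwa [hsnd, ha, zero_smul, add_zero, snd_zero] at h
        obtain ⟨c, hc⟩ := (key1 z.fst).mp h2
        obtain ⟨n, hn⟩ := divisible' hv z.snd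
        refine ⟨inl c + inr n, TrivSqZeroExt.ext ?_ ?_⟩
        · rw [fst_mul, fst_add, fst_inl, fst_inr, add_zero, fst_inl, hc, mul_comm]
        · rw [hsnd, fst_add, fst_inl, fst_inr, add_zero, snd_inl, smul_zero, zero_add,
            fst_inl, snd_add, snd_inl, snd_inr, zero_add, hn]
      · rintro ⟨w, rfl⟩
        refine TrivSqZeroExt.ext ?_ ?_
        · rw [fst_mul, ha, mul_zero, fst_zero]
        · rw [hsnd, ha, zero_smul, add_zero, snd_zero, fst_mul, fst_inl, mul_smul,
            hvx, smul_zero]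
    · ext z
      simp only [Set.mem_setOf_eq]
      constructor
      · intro hz
        have h1 : z.fst * v = 0 := by
          have h := congrArg TrivSqZeroExt.fst hz
          rwa [fst_mul, fst_inl, fst_zero] at h
        have hz1 : z.fst = 0 := by
          rcases mul_eq_zero.mp h1 with h | h
          · exact h
          · exact absurd h hv
        have h2 : v • z.snd = 0 := by
          have h := congrArg TrivSqZeroExt.snd hz
          rwa [hsnd, snd_inl, smul_zero, zero_add, fst_inl, snd_zero] at h
        obtain ⟨c, hc⟩ := (key2 z.snd).mp h2
        refine ⟨inl c, TrivSqZeroExt.ext ?_ ?_⟩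
        · rw [fst_mul, fst_inl, ha, mul_zero, hz1]
        · rw [hsnd, fst_inl, snd_inl, ha, zero_smul, add_zero]
          exact hc
      · rintro ⟨w, rfl⟩
        refine TrivSqZeroExt.ext ?_ ?_
        · rw [fst_mul, fst_inl, fst_mul, ha, mul_zero, zero_mul, fst_zero]
        · rw [hsnd, snd_inl, smul_zero, zero_add, fst_inl, hsnd, ha, zero_smul, add_zero,
            ← mul_smul, mul_comm, mul_smul, hvx, smul_zero, snd_zero]
  · -- case `a ≠ 0`: partner is `inr (mk (φ a)⁻¹)`
    obtain ⟨ia, hia⟩ : ∃ q0 : Localization (nonZeroDivisors R),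
        q0 = (algebraMap R (Localization (nonZeroDivisors R)) x.fst)⁻¹ := ⟨_, rfl⟩
    obtain ⟨n0, hn0⟩ : ∃ m0 : QuotModR R, m0 = Submodule.Quotient.mk ia := ⟨_, rfl⟩
    have hmul : algebraMap R (Localization (nonZeroDivisors R)) x.fst * ia = 1 := by
      rw [hia]; exact mul_inv_cancel₀ (map_ne_zero' ha)
    have keyA : ∀ r : R, r • n0 = 0 ↔ x.fst ∣ r := by
      intro r
      rw [hn0, smul_mk', mk_eq_zero_iff']
      constructor
      · rintro ⟨c, hc⟩
        refine ⟨c, IsFractionRing.injective R (Localization (nonZeroDivisors R)) ?_⟩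
        rw [map_mul, hc, mul_left_comm, hmul, mul_one]
      · rintro ⟨c, rfl⟩
        refine ⟨c, ?_⟩
        rw [map_mul, mul_comm (algebraMap R (Localization (nonZeroDivisors R)) x.fst),
          mul_assoc, hmul, mul_one]
    have ha0 : x.fst • n0 = 0 := (keyA x.fst).mpr dvd_rfl
    have keyB : ∀ m : QuotModR R, x.fst • m = 0 ↔ ∃ c : R, m = c • n0 := by
      intro m
      obtain ⟨p, rfl⟩ := Submodule.Quotient.mk_surjective _ m
      constructor
      · intro h
        rw [smul_mk', mk_eq_zero_iff'] at h
        obtain ⟨c, hc⟩ := h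
        refine ⟨c, ?_⟩
        have hpq : p = algebraMap R (Localization (nonZeroDivisors R)) c * ia := by
          rw [hc, mul_right_comm, hmul, one_mul]
        rw [hpq, hn0, smul_mk']
      · rintro ⟨c, hcc⟩
        rw [hcc, ← mul_smul, mul_comm, mul_smul, ha0, smul_zero]
    refine ⟨inr n0, ?_, ?_⟩
    · ext z
      simp only [Set.mem_setOf_eq]
      constructor
      · intro hz
        have h1 : z.fst * x.fst = 0 := by
          have h := congrArg TrivSqZeroExt.fst hz
          rwa [fst_mul, fst_zero] at h
        have hz1 : z.fst = 0 := by
          rcases mul_eq_zero.mp h1 with h | h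
          · exact h
          · exact absurd h ha
        have h2 : x.fst • z.snd = 0 := by
          have h := congrArg TrivSqZeroExt.snd hz
          rwa [hsnd, hz1, zero_smul, zero_add, snd_zero] at h
        obtain ⟨c, hc⟩ := (keyB z.snd).mp h2
        refine ⟨inl c, TrivSqZeroExt.ext ?_ ?_⟩
        · rw [fst_mul, fst_inl, fst_inr, mul_zero, hz1]
        · rw [hsnd, fst_inl, snd_inr, fst_inr, snd_inl, smul_zero, add_zero]
          exact hc
      · rintro ⟨w, rfl⟩
        refine TrivSqZeroExt.ext ?_ ?_
        · rw [fst_mul, fst_mul, fst_inr, mul_zero, zero_mul, fst_zero]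
        · rw [hsnd, fst_mul, fst_inr, mul_zero, zero_smul, zero_add, hsnd, snd_inr,
            fst_inr, zero_smul, add_zero, ← mul_smul, mul_comm, mul_smul, ha0,
            smul_zero, snd_zero]
    · ext z
      simp only [Set.mem_setOf_eq]
      constructor
      · intro hz
        have h2 : z.fst • n0 = 0 := by
          have h := congrArg TrivSqZeroExt.snd hz
          rwa [hsnd, snd_inr, fst_inr, zero_smul, add_zero, snd_zero] at h
        obtain ⟨c, hc⟩ := (keyA z.fst).mp h2
        obtain ⟨n, hn⟩ := divisible' ha (z.snd - c • x.snd)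
        refine ⟨inl c + inr n, TrivSqZeroExt.ext ?_ ?_⟩
        · rw [fst_mul, fst_add, fst_inl, fst_inr, add_zero, hc, mul_comm]
        · rw [hsnd, fst_add, fst_inl, fst_inr, add_zero, snd_add, snd_inl, snd_inr,
            zero_add, hn]
          abel
      · rintro ⟨w, rfl⟩
        refine TrivSqZeroExt.ext ?_ ?_
        · rw [fst_mul, fst_inr, mul_zero, fst_zero]
        · rw [hsnd, fst_inr, snd_inr, zero_smul, add_zero, fst_mul, mul_smul, ha0,
            smul_zero, snd_zero]
end
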